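/- Let $m \ge 2$, $z > 0$ real, and $z_1, \ldots, z_n$ nonzero complex numbers closed under conjugation with $\pi - \pi/m < |\operatorname{Arg} z_j| \le \pi$ for all $j$. Let $\omega_k = e^{(2k-1)\pi i/m}$ and $q_{j,k} = \frac{\omega_k z - z_j}{\omega_0 z - \overline{z_j}}$. Then $\prod_{j=1}^n |q_{j,k}| \le 1$ for all $0 \le k < m$, with equality if and only if $k = 0$ or $k = 1$. -/

import Mathlib

/-- The `m`-th roots of `-1`: `ω_k = e^{(2k-1)πi/m}`. -/
noncomputable def omegaRoot (m k : ℕ) : ℂ :=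
  Complex.exp ((2 * (k : ℂ) - 1) * Real.pi * Complex.I / m)

lemma L_re_mul (c d x : ℝ) : ((c:ℂ) * d * Complex.exp (↑x * Complex.I)).re = c*d*Real.cos x := by
  simp [Complex.mul_re, Complex.exp_ofReal_mul_I_re, Complex.exp_ofReal_mul_I_im]

lemma L_absq (z θ : ℝ) (a : ℂ) :
    (‖Complex.exp (↑θ * Complex.I) * ↑z - a‖)^2
      = z^2 + (‖a‖)^2 - 2*z*(‖a‖)*Real.cos (θ - a.arg) := by
  rw [Complex.sq_norm, Complex.normSq_sub]
  have h1 : Complex.normSq (Complex.exp (↑θ * Complex.I) * ↑z) = z^2 := by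
    simp [Complex.normSq_mul, ← Complex.sq_norm, Complex.norm_exp_ofReal_mul_I, sq]
  have h2 : Complex.normSq a = (‖a‖)^2 := (Complex.sq_norm a).symm
  have h3 : (Complex.exp (↑θ * Complex.I) * ↑z * (starRingEnd ℂ) a).re
      = z * ‖a‖ * Real.cos (θ - a.arg) := by
    conv_lhs => rw [← Complex.norm_mul_exp_arg_mul_I a]
    rw [map_mul, ← Complex.exp_conj]
    simp only [map_mul, Complex.conj_ofReal, Complex.conj_I, mul_neg]
    rw [show Complex.exp (↑θ * Complex.I) * ↑z * (↑(‖a‖) * Complex.exp (-(↑a.arg * Complex.I)))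
        = ↑z * ↑(‖a‖) * (Complex.exp (↑θ * Complex.I) * Complex.exp (-(↑a.arg * Complex.I))) by ring,
      ← Complex.exp_add]
    rw [show (↑θ * Complex.I + -(↑a.arg * Complex.I)) = ↑(θ - a.arg) * Complex.I by push_cast; ring]
    exact L_re_mul z (‖a‖) (θ - a.arg)
  rw [h1, h2, h3]; ring

lemma L_absq_conj (z θ : ℝ) (a : ℂ) :
    (‖Complex.exp (↑θ * Complex.I) * ↑z - (starRingEnd ℂ) a‖)^2
      = z^2 + (‖a‖)^2 - 2*z*(‖a‖)*Real.cos (θ + a.arg) := by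
  have h : Complex.exp (↑θ * Complex.I) * ↑z - (starRingEnd ℂ) a
      = (starRingEnd ℂ) (Complex.exp (↑(-θ) * Complex.I) * ↑z - a) := by
    rw [map_sub, map_mul, ← Complex.exp_conj]
    simp [Complex.conj_ofReal, Complex.conj_I]
  rw [h, Complex.norm_conj, L_absq]
  rw [show -θ - a.arg = -(θ + a.arg) by ring, Real.cos_neg]

lemma L_pair_id (A B cθ sθ cφ sφ : ℝ) (hθ : sθ^2 + cθ^2 = 1) (hφ : sφ^2 + cφ^2 = 1) :
    (A - B*(cθ*cφ + sθ*sφ)) * (A - B*(cθ*cφ - sθ*sφ))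
      = (B*cθ - A*cφ)^2 + (A^2 - B^2)*sφ^2 := by
  linear_combination (-A^2 + B^2*cθ^2) * hφ - B^2*sφ^2 * hθ

lemma L_quad_aux (A B cφ c c₀ : ℝ) (hB : 0 < B) (hAB : B ≤ A) (hcφ : cφ < -c₀)
    (hc0 : 0 ≤ c₀) (h3 : 0 ≤ 3*c₀ + c) : 0 < B*(c₀+c) - 2*A*cφ := by
  nlinarith [mul_nonneg hB.le h3, mul_nonneg (show (0:ℝ) ≤ A - B by linarith) hc0,
    mul_neg_of_pos_of_neg (show (0:ℝ) < 2*A by linarith) (show cφ + c₀ < 0 by linarith)]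

lemma L_quad_le (A B cφ c c₀ : ℝ) (hB : 0 < B) (hAB : B ≤ A) (hcφ : cφ < -c₀)
    (hc0 : 0 ≤ c₀) (h3 : 0 ≤ 3*c₀ + c) (h2 : c ≤ c₀) :
    (B*c - A*cφ)^2 ≤ (B*c₀ - A*cφ)^2 := by
  nlinarith [mul_nonneg (mul_nonneg hB.le (sub_nonneg.2 h2))
    (L_quad_aux A B cφ c c₀ hB hAB hcφ hc0 h3).le]

lemma L_quad_lt (A B cφ c c₀ : ℝ) (hB : 0 < B) (hAB : B ≤ A) (hcφ : cφ < -c₀)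
    (hc0 : 0 ≤ c₀) (h3 : 0 ≤ 3*c₀ + c) (h2 : c < c₀) :
    (B*c - A*cφ)^2 < (B*c₀ - A*cφ)^2 := by
  nlinarith [mul_pos (mul_pos hB (sub_pos.2 h2)) (L_quad_aux A B cφ c c₀ hB hAB hcφ hc0 h3)]

lemma L_pos (A B cφ c₀ sφ : ℝ) (hA : 0 < A) (hB : 0 ≤ B) (hAB : B ≤ A) (hcφ : cφ < -c₀) (hc0 : 0 ≤ c₀) :
    0 < (B*c₀ - A*cφ)^2 + (A^2 - B^2)*sφ^2 := by
  have h1 : 0 < B*c₀ - A*cφ := by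
    nlinarith [mul_nonneg hB hc0, mul_pos hA (show 0 < -cφ - c₀ by linarith)]
  nlinarith [pow_pos h1 2, mul_nonneg (show (0:ℝ) ≤ A^2 - B^2 by nlinarith) (sq_nonneg sφ)]

lemma L_cos_le (m k : ℕ) (hm : 2 ≤ m) (hk : k < m) :
    Real.cos ((2*(k:ℝ)-1)*Real.pi/m) ≤ Real.cos (Real.pi/m) := by
  have hm0 : (0:ℝ) < m := by positivity
  have ht : 0 < Real.pi/m := by positivity
  have hπ : Real.pi = m * (Real.pi/m) := by field_simp
  set t := Real.pi/m with htdef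
  have hx : (2*(k:ℝ)-1)*Real.pi/m = (2*(k:ℝ)-1)*t := by rw [htdef]; ring
  rw [hx]
  rcases Nat.eq_zero_or_pos k with rfl | hk1
  · rw [show (2*((0:ℕ):ℝ)-1)*t = -t by push_cast; ring, Real.cos_neg]
  · have hk1' : (1:ℝ) ≤ k := by exact_mod_cast hk1
    have hkm : (k:ℝ) ≤ m - 1 := by
      have : (k:ℝ) + 1 ≤ m := by exact_mod_cast hk
      linarith
    rcases le_or_gt ((2*(k:ℝ)-1)*t) Real.pi with hle | hgt
    · exact Real.cos_le_cos_of_nonneg_of_le_pi ht.le hle (by nlinarith)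
    · rw [← Real.cos_two_pi_sub]
      exact Real.cos_le_cos_of_nonneg_of_le_pi ht.le (by linarith) (by nlinarith)

lemma L_cos_lt (m k : ℕ) (hm : 2 ≤ m) (hk2 : 2 ≤ k) (hk : k < m) :
    Real.cos ((2*(k:ℝ)-1)*Real.pi/m) < Real.cos (Real.pi/m) := by
  have hm0 : (0:ℝ) < m := by positivity
  have ht : 0 < Real.pi/m := by positivity
  have hπ : Real.pi = m * (Real.pi/m) := by field_simp
  set t := Real.pi/m with htdef
  have hx : (2*(k:ℝ)-1)*Real.pi/m = (2*(k:ℝ)-1)*t := by rw [htdef]; ring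
  rw [hx]
  have hk2' : (2:ℝ) ≤ k := by exact_mod_cast hk2
  have hkm : (k:ℝ) ≤ m - 1 := by
    have : (k:ℝ) + 1 ≤ m := by exact_mod_cast hk
    linarith
  rcases le_or_gt ((2*(k:ℝ)-1)*t) Real.pi with hle | hgt
  · exact Real.cos_lt_cos_of_nonneg_of_le_pi ht.le hle (by nlinarith)
  · rw [← Real.cos_two_pi_sub]
    exact Real.cos_lt_cos_of_nonneg_of_le_pi ht.le (by linarith) (by nlinarith)

lemma L_3c0 (m k : ℕ) (hm : 2 ≤ m) (hk : k < m) :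
    0 ≤ 3 * Real.cos (Real.pi/m) + Real.cos ((2*(k:ℝ)-1)*Real.pi/m) := by
  have hm0 : (0:ℝ) < m := by positivity
  rcases eq_or_lt_of_le hm with rfl | hm3
  · interval_cases k
    · push_cast
      rw [show (2*(0:ℝ)-1)*Real.pi/2 = -(Real.pi/2) by ring, Real.cos_neg,
        show Real.pi/(2:ℝ) = Real.pi/2 by norm_num, Real.cos_pi_div_two]
      norm_num
    · push_cast
      rw [show (2*(1:ℝ)-1)*Real.pi/2 = Real.pi/2 by ring,
        show Real.pi/(2:ℝ) = Real.pi/2 by norm_num, Real.cos_pi_div_two]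
      norm_num
  · have hm3' : (3:ℝ) ≤ m := by exact_mod_cast hm3
    have h1 : Real.cos (Real.pi/3) ≤ Real.cos (Real.pi/m) := by
      apply Real.cos_le_cos_of_nonneg_of_le_pi (by positivity)
      · nlinarith [Real.pi_pos]
      · rw [div_le_div_iff₀ (by positivity) (by norm_num)]
        nlinarith [Real.pi_pos]
    rw [Real.cos_pi_div_three] at h1
    nlinarith [Real.neg_one_le_cos ((2*(k:ℝ)-1)*Real.pi/m)]

lemma L_conjprod {n : ℕ} (zs : Fin n → ℂ)
    (hconj : Multiset.map (starRingEnd ℂ) (List.ofFn zs : Multiset ℂ) = (List.ofFn zs : Multiset ℂ))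
    (g : ℂ → ℝ) :
    ∏ j, g ((starRingEnd ℂ) (zs j)) = ∏ j, g (zs j) := by
  have key : ∀ (f : Fin n → ℂ),
      ∏ j, g (f j) = (Multiset.map g (List.ofFn f : Multiset ℂ)).prod := by
    intro f
    rw [Multiset.map_coe, Multiset.prod_coe, List.map_ofFn, List.prod_ofFn]
    rfl
  rw [key (fun j => (starRingEnd ℂ) (zs j)), key zs]
  rw [show (List.ofFn (fun j => (starRingEnd ℂ) (zs j)) : Multiset ℂ)
      = Multiset.map (starRingEnd ℂ) (List.ofFn zs : Multiset ℂ) by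
    rw [Multiset.map_coe, List.map_ofFn]; rfl]
  rw [hconj]

/-- The per-pair quadratic value. -/
noncomputable def Ffun (z : ℝ) (m : ℕ) (a : ℂ) (k : ℕ) : ℝ :=
  (2*z*‖a‖ * Real.cos ((2*(k:ℝ)-1)*Real.pi/m)
      - (z^2 + (‖a‖)^2) * Real.cos a.arg)^2
    + ((z^2 + (‖a‖)^2)^2 - (2*z*‖a‖)^2) * (Real.sin a.arg)^2

section Ffacts

variable {z : ℝ} {m : ℕ} {a : ℂ}

lemma Ffun_nonneg (hz : 0 < z) (hr : 0 < ‖a‖) (k : ℕ) : 0 ≤ Ffun z m a k := by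
  unfold Ffun
  have hAB : 2*z*‖a‖ ≤ z^2 + (‖a‖)^2 := by
    nlinarith [sq_nonneg (z - ‖a‖)]
  have hB : (0:ℝ) < 2*z*‖a‖ := by positivity
  have h1 : 0 ≤ (z^2 + (‖a‖)^2)^2 - (2*z*‖a‖)^2 := by nlinarith
  exact add_nonneg (sq_nonneg _) (mul_nonneg h1 (sq_nonneg _))

lemma Ffun_basic (hz : 0 < z) (hr : 0 < ‖a‖) :
    0 < 2*z*‖a‖ ∧ 2*z*‖a‖ ≤ z^2 + (‖a‖)^2 ∧
      0 < z^2 + (‖a‖)^2 := by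
  refine ⟨by positivity, ?_, by positivity⟩
  nlinarith [sq_nonneg (z - ‖a‖)]

lemma Ffun_cos_zero (hm0 : (0:ℝ) < m) :
    Real.cos ((2*((0:ℕ):ℝ)-1)*Real.pi/m) = Real.cos (Real.pi/m) := by
  rw [show (2*((0:ℕ):ℝ)-1)*Real.pi/m = -(Real.pi/m) by push_cast; ring, Real.cos_neg]

lemma Ffun_pos (hm : 2 ≤ m) (hz : 0 < z) (hr : 0 < ‖a‖)
    (hcφ : Real.cos a.arg < -Real.cos (Real.pi/m))
    (hc0 : 0 ≤ Real.cos (Real.pi/m)) : 0 < Ffun z m a 0 := by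
  obtain ⟨hB, hAB, hA⟩ := Ffun_basic hz hr
  have hm0 : (0:ℝ) < m := by positivity
  unfold Ffun
  rw [Ffun_cos_zero hm0]
  exact L_pos _ _ _ _ _ hA hB.le hAB hcφ hc0

lemma Ffun_le (hm : 2 ≤ m) (hz : 0 < z) (hr : 0 < ‖a‖)
    (hcφ : Real.cos a.arg < -Real.cos (Real.pi/m))
    (hc0 : 0 ≤ Real.cos (Real.pi/m)) {k : ℕ} (hk : k < m) :
    Ffun z m a k ≤ Ffun z m a 0 := by
  obtain ⟨hB, hAB, hA⟩ := Ffun_basic hz hr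
  have hm0 : (0:ℝ) < m := by positivity
  unfold Ffun
  rw [Ffun_cos_zero hm0]
  have := L_quad_le (z^2 + (‖a‖)^2) (2*z*‖a‖) (Real.cos a.arg)
    (Real.cos ((2*(k:ℝ)-1)*Real.pi/m)) (Real.cos (Real.pi/m)) hB hAB hcφ hc0
    (by linarith [L_3c0 m k hm hk]) (L_cos_le m k hm hk)
  linarith

lemma Ffun_lt (hm : 2 ≤ m) (hz : 0 < z) (hr : 0 < ‖a‖)
    (hcφ : Real.cos a.arg < -Real.cos (Real.pi/m))
    (hc0 : 0 ≤ Real.cos (Real.pi/m)) {k : ℕ} (hk2 : 2 ≤ k) (hk : k < m) :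
    Ffun z m a k < Ffun z m a 0 := by
  obtain ⟨hB, hAB, hA⟩ := Ffun_basic hz hr
  have hm0 : (0:ℝ) < m := by positivity
  unfold Ffun
  rw [Ffun_cos_zero hm0]
  have := L_quad_lt (z^2 + (‖a‖)^2) (2*z*‖a‖) (Real.cos a.arg)
    (Real.cos ((2*(k:ℝ)-1)*Real.pi/m)) (Real.cos (Real.pi/m)) hB hAB hcφ hc0
    (by linarith [L_3c0 m k hm hk]) (L_cos_lt m k hm hk2 hk)
  linarith

end Ffacts

set_option maxHeartbeats 1000000 in
/-- For `m ≥ 2`, `z > 0`, and nonzero `z_1, …, z_n` closed under conjugation with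
`π - π/m < |Arg z_j| ≤ π`, setting `q_{j,k} = (ω_k z - z_j)/(ω_0 z - conj z_j)`, one has
`∏_j |q_{j,k}| ≤ 1` for all `0 ≤ k < m`, with equality iff `k = 0` or `k = 1`
(strictness requiring `m > 2`). -/
theorem stmt_8 (m : ℕ) (hm : 2 ≤ m) (z : ℝ) (hz : 0 < z) (n : ℕ) (hn : 0 < n)
    (zs : Fin n → ℂ) (hz0 : ∀ j, zs j ≠ 0)
    (hconj : Multiset.map (starRingEnd ℂ) (List.ofFn zs : Multiset ℂ) = (List.ofFn zs : Multiset ℂ))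
    (harg : ∀ j, Real.pi - Real.pi / m < |(zs j).arg| ∧ |(zs j).arg| ≤ Real.pi) :
    (∀ k < m, ∏ j, ‖(omegaRoot m k * z - zs j) / (omegaRoot m 0 * z - (starRingEnd ℂ) (zs j))‖ ≤ 1) ∧
    (2 < m → ∀ k < m,
      ((∏ j, ‖(omegaRoot m k * z - zs j) / (omegaRoot m 0 * z - (starRingEnd ℂ) (zs j))‖) = 1
        ↔ k = 0 ∨ k = 1)) := by
  have hmnat : 0 < m := by omega
  have hm0 : (0:ℝ) < m := by exact_mod_cast hmnat
  have hπm2 : Real.pi/m ≤ Real.pi/2 := by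
    rw [div_le_div_iff₀ hm0 (by norm_num : (0:ℝ) < 2)]
    have h2m : (2:ℝ) ≤ m := by exact_mod_cast hm
    nlinarith [Real.pi_pos]
  have hc0 : 0 ≤ Real.cos (Real.pi/m) := by
    apply Real.cos_nonneg_of_neg_pi_div_two_le_of_le _ hπm2
    have : (0:ℝ) < Real.pi/m := by positivity
    linarith [Real.pi_pos]
  have hr : ∀ j, 0 < ‖zs j‖ := fun j => norm_pos_iff.mpr (hz0 j)
  have hcφ : ∀ j, Real.cos (zs j).arg < -Real.cos (Real.pi/m) := by
    intro j
    obtain ⟨h1, h2⟩ := harg j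
    have h0 : 0 ≤ Real.pi - Real.pi/m := by linarith [Real.pi_pos]
    have h3 := Real.cos_lt_cos_of_nonneg_of_le_pi h0 h2 h1
    rw [Real.cos_abs, Real.cos_pi_sub] at h3
    exact h3
  have homega : ∀ k : ℕ, omegaRoot m k
      = Complex.exp (↑((2*(k:ℝ)-1)*Real.pi/m) * Complex.I) := by
    intro k; unfold omegaRoot; congr 1; push_cast; ring
  have hsplit : ∀ k, (∏ j, ‖(omegaRoot m k * ↑z - zs j) / (omegaRoot m 0 * ↑z - (starRingEnd ℂ) (zs j))‖)
      = (∏ j, ‖omegaRoot m k * ↑z - zs j‖)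
        / (∏ j, ‖omegaRoot m 0 * ↑z - (starRingEnd ℂ) (zs j)‖) := by
    intro k
    rw [← Finset.prod_div_distrib]
    exact Finset.prod_congr rfl fun j _ => norm_div _ _
  have hgen : ∀ c : ℂ, (∏ j, ‖c - (starRingEnd ℂ) (zs j)‖)
      = ∏ j, ‖c - zs j‖ :=
    fun c => L_conjprod zs hconj (fun w => ‖c - w‖)
  have hD : (∏ j, ‖omegaRoot m 0 * ↑z - (starRingEnd ℂ) (zs j)‖)
      = ∏ j, ‖omegaRoot m 0 * ↑z - zs j‖ := hgen _
  have hNc : ∀ k : ℕ, (∏ j, ‖omegaRoot m k * ↑z - (starRingEnd ℂ) (zs j)‖)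
      = ∏ j, ‖omegaRoot m k * ↑z - zs j‖ :=
    fun k => hgen _
  have hkey : ∀ k : ℕ, (∏ j, ‖omegaRoot m k * ↑z - zs j‖)^4
      = ∏ j, Ffun z m (zs j) k := by
    intro k
    have e1 : (∏ j, ‖omegaRoot m k * ↑z - zs j‖)^4
        = (∏ j, (‖omegaRoot m k * ↑z - zs j‖)^2)
          * (∏ j, (‖omegaRoot m k * ↑z - (starRingEnd ℂ) (zs j)‖)^2) := by
      rw [Finset.prod_pow, Finset.prod_pow, hNc k]; ring
    rw [e1, ← Finset.prod_mul_distrib]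
    apply Finset.prod_congr rfl
    intro j _
    rw [homega k, L_absq z ((2*(k:ℝ)-1)*Real.pi/m) (zs j),
      L_absq_conj z ((2*(k:ℝ)-1)*Real.pi/m) (zs j), Real.cos_sub, Real.cos_add]
    unfold Ffun
    linear_combination L_pair_id (z^2 + (‖zs j‖)^2) (2*z*‖zs j‖)
      (Real.cos ((2*(k:ℝ)-1)*Real.pi/m)) (Real.sin ((2*(k:ℝ)-1)*Real.pi/m))
      (Real.cos (zs j).arg) (Real.sin (zs j).arg)
      (Real.sin_sq_add_cos_sq _) (Real.sin_sq_add_cos_sq _)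
  have hNnonneg : ∀ k : ℕ, 0 ≤ ∏ j, ‖omegaRoot m k * ↑z - zs j‖ :=
    fun k => Finset.prod_nonneg fun j _ => norm_nonneg _
  have hN0pos : 0 < ∏ j, ‖omegaRoot m 0 * ↑z - zs j‖ := by
    have h4 : 0 < (∏ j, ‖omegaRoot m 0 * ↑z - zs j‖)^4 := by
      rw [hkey 0]
      exact Finset.prod_pos fun j _ => Ffun_pos hm hz (hr j) (hcφ j) hc0
    rcases (hNnonneg 0).lt_or_eq with h | h
    · exact h
    · rw [← h] at h4; norm_num at h4
  have hle : ∀ k < m, (∏ j, ‖omegaRoot m k * ↑z - zs j‖)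
      ≤ ∏ j, ‖omegaRoot m 0 * ↑z - zs j‖ := by
    intro k hk
    have h4 : (∏ j, ‖omegaRoot m k * ↑z - zs j‖)^4
        ≤ (∏ j, ‖omegaRoot m 0 * ↑z - zs j‖)^4 := by
      rw [hkey k, hkey 0]
      exact Finset.prod_le_prod (fun j _ => Ffun_nonneg hz (hr j) k)
        (fun j _ => Ffun_le hm hz (hr j) (hcφ j) hc0 hk)
    exact (pow_le_pow_iff_left₀ (hNnonneg k) (hNnonneg 0) (by norm_num)).1 h4
  have hlt : ∀ k, 2 ≤ k → k < m → (∏ j, ‖omegaRoot m k * ↑z - zs j‖)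
      < ∏ j, ‖omegaRoot m 0 * ↑z - zs j‖ := by
    intro k hk2 hk
    have h4 : (∏ j, ‖omegaRoot m k * ↑z - zs j‖)^4
        < (∏ j, ‖omegaRoot m 0 * ↑z - zs j‖)^4 := by
      rw [hkey k, hkey 0]
      by_cases hex : ∃ j, Ffun z m (zs j) k = 0
      · obtain ⟨j0, hj0⟩ := hex
        rw [Finset.prod_eq_zero (Finset.mem_univ j0) hj0]
        exact Finset.prod_pos fun j _ => Ffun_pos hm hz (hr j) (hcφ j) hc0
      · push_neg at hex
        have : Nonempty (Fin n) := ⟨⟨0, hn⟩⟩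
        apply Finset.prod_lt_prod_of_nonempty
          (fun j _ => lt_of_le_of_ne (Ffun_nonneg hz (hr j) k) (Ne.symm (hex j)))
          (fun j _ => Ffun_lt hm hz (hr j) (hcφ j) hc0 hk2 hk)
          Finset.univ_nonempty
    exact (pow_lt_pow_iff_left₀ (hNnonneg k) (hNnonneg 0) (by norm_num)).1 h4
  have hN1 : (∏ j, ‖omegaRoot m 1 * ↑z - zs j‖)
      = ∏ j, ‖omegaRoot m 0 * ↑z - zs j‖ := by
    rw [← hD]
    apply Finset.prod_congr rfl
    intro j _
    have hco : (starRingEnd ℂ) (omegaRoot m 1 * ↑z - zs j)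
        = omegaRoot m 0 * ↑z - (starRingEnd ℂ) (zs j) := by
      rw [map_sub, map_mul, Complex.conj_ofReal]
      congr 2
      unfold omegaRoot
      rw [← Complex.exp_conj]
      congr 1
      simp only [map_div₀, map_mul, map_sub, map_one, map_ofNat, Complex.conj_I,
        Complex.conj_ofReal, Complex.conj_natCast, Nat.cast_one, Nat.cast_zero]
      ring
    calc ‖omegaRoot m 1 * ↑z - zs j‖
        = ‖(starRingEnd ℂ) (omegaRoot m 1 * ↑z - zs j)‖ :=
          (Complex.norm_conj _).symm
      _ = ‖omegaRoot m 0 * ↑z - (starRingEnd ℂ) (zs j)‖ := by rw [hco]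
  constructor
  · intro k hk
    rw [hsplit k, hD]
    exact div_le_one_of_le₀ (hle k hk) (hNnonneg 0)
  · intro _ k hk
    rw [hsplit k, hD]
    constructor
    · intro h
      by_contra hcon
      push_neg at hcon
      obtain ⟨hk0, hk1⟩ := hcon
      have hk2 : 2 ≤ k := by omega
      have hstrict := hlt k hk2 hk
      rw [div_eq_one_iff_eq (ne_of_gt hN0pos)] at h
      linarith
    · rintro (rfl | rfl)
      · exact div_self (ne_of_gt hN0pos)
      · rw [hN1]
        exact div_self (ne_of_gt hN0pos)
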